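/- Let ω ⊂ ℝ^d be a measurable subset. Then ω is 1-weakly thick if and only if liminf_{R → +∞} |ω ∩ B(0,R)| / |B(0,R)| > 0. -/

import Mathlib

open MeasureTheory

/-- Partial derivative in the `i`-th coordinate direction. -/
noncomputable def pderiv1 (d : ℕ) (i : Fin d) (f : EuclideanSpace ℝ (Fin d) → ℂ) :
    EuclideanSpace ℝ (Fin d) → ℂ :=
  fun x => fderiv ℝ f x (EuclideanSpace.single i 1)

/-- Iterated partial derivative in the `i`-th coordinate direction. -/
noncomputable def pderivIter (d : ℕ) (i : Fin d) : ℕ → (EuclideanSpace ℝ (Fin d) → ℂ) →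
    EuclideanSpace ℝ (Fin d) → ℂ
  | 0 => id
  | n + 1 => fun f => pderiv1 d i (pderivIter d i n f)

/-- Partial derivative `∂_x^β` associated with a multi-index `β`. -/
noncomputable def pderivMulti (d : ℕ) (β : Fin d → ℕ) (f : EuclideanSpace ℝ (Fin d) → ℂ) :
    EuclideanSpace ℝ (Fin d) → ℂ :=
  (List.finRange d).foldr (fun i g => pderivIter d i (β i) g) f

/-- Minus the Laplacian. -/
noncomputable def negLap (d : ℕ) (f : EuclideanSpace ℝ (Fin d) → ℂ) :
    EuclideanSpace ℝ (Fin d) → ℂ :=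
  fun x => -∑ i : Fin d, pderivIter d i 2 f x

/-- Iterates `(-Δ)^m` of minus the Laplacian. -/
noncomputable def negLapPow (d : ℕ) : ℕ → (EuclideanSpace ℝ (Fin d) → ℂ) →
    EuclideanSpace ℝ (Fin d) → ℂ
  | 0 => id
  | n + 1 => fun f => negLap d (negLapPow d n f)

/-- The Japanese bracket `⟨x⟩ = (1 + |x|²)^{1/2}`. -/
noncomputable def jap {d : ℕ} (x : EuclideanSpace ℝ (Fin d)) : ℝ :=
  Real.sqrt (1 + ‖x‖ ^ 2)

/-- `ψ` is a (smooth, square integrable) eigenfunction of the anisotropic Shubin operator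
`H_{k,m} = (-Δ)^m + |x|^{2k}` with eigenvalue `μ`. -/
noncomputable def IsShubinEigen (d k m : ℕ) (μ : ℝ) (ψ : EuclideanSpace ℝ (Fin d) → ℂ) : Prop :=
  ContDiff ℝ (⊤ : ℕ∞) ψ ∧ MemLp ψ 2 (volume : Measure (EuclideanSpace ℝ (Fin d))) ∧
    ∀ x, negLapPow d m ψ x + (‖x‖ ^ (2 * k) : ℝ) * ψ x = (μ : ℂ) * ψ x

/-- The space `E_λ^{k,m}`: the complex linear span of eigenfunctions of `H_{k,m}` with
eigenvalue at most `λ`. -/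
noncomputable def shubinSpan (d k m : ℕ) (lam : ℝ) : Submodule ℂ (EuclideanSpace ℝ (Fin d) → ℂ) :=
  Submodule.span ℂ {ψ | ∃ μ : ℝ, 0 < μ ∧ μ ≤ lam ∧ IsShubinEigen d k m μ ψ}

/-- `ω ⊆ ℝ^d` is `δ`-weakly thick. -/
noncomputable def IsWeaklyThick (d : ℕ) (δ : ℝ) (ω : Set (EuclideanSpace ℝ (Fin d))) : Prop :=
  ∃ γ R : ℝ, 0 < γ ∧ γ ≤ 1 ∧ 0 < R ∧
    ∀ x : EuclideanSpace ℝ (Fin d),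
      ENNReal.ofReal γ * volume (Metric.ball x (R * jap x ^ δ))
        ≤ volume (ω ∩ Metric.ball x (R * jap x ^ δ))

open Metric Filter

lemma one_le_jap {d : ℕ} (x : EuclideanSpace ℝ (Fin d)) : 1 ≤ jap x := by
  have h : Real.sqrt 1 ≤ Real.sqrt (1 + ‖x‖ ^ 2) :=
    Real.sqrt_le_sqrt (by nlinarith [sq_nonneg ‖x‖])
  simpa [jap] using h

lemma norm_le_jap {d : ℕ} (x : EuclideanSpace ℝ (Fin d)) : ‖x‖ ≤ jap x := by
  have h : Real.sqrt (‖x‖ ^ 2) ≤ Real.sqrt (1 + ‖x‖ ^ 2) :=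
    Real.sqrt_le_sqrt (by nlinarith)
  simpa [jap, Real.sqrt_sq (norm_nonneg x)] using h

lemma jap_le {d : ℕ} (x : EuclideanSpace ℝ (Fin d)) : jap x ≤ 1 + ‖x‖ := by
  have h : Real.sqrt (1 + ‖x‖ ^ 2) ≤ Real.sqrt ((1 + ‖x‖) ^ 2) :=
    Real.sqrt_le_sqrt (by nlinarith [norm_nonneg x])
  simpa [jap, Real.sqrt_sq (by positivity : (0:ℝ) ≤ 1 + ‖x‖)] using h

lemma jap_pos {d : ℕ} (x : EuclideanSpace ℝ (Fin d)) : 0 < jap x :=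
  lt_of_lt_of_le one_pos (one_le_jap x)

lemma volball {d : ℕ} (x : EuclideanSpace ℝ (Fin d)) {r : ℝ} (hr : 0 < r) :
    volume (ball x r) = ENNReal.ofReal (r ^ d)
      * volume (ball (0 : EuclideanSpace ℝ (Fin d)) 1) := by
  rw [MeasureTheory.Measure.addHaar_ball_of_pos volume x hr, finrank_euclideanSpace_fin]


/-- characterization of `1`-weakly thick sets via a liminf of density ratios. -/
theorem isWeaklyThick_one_iff_liminf
    (d : ℕ) (ω : Set (EuclideanSpace ℝ (Fin d))) (hω : MeasurableSet ω) :
    IsWeaklyThick d 1 ω ↔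
      0 < Filter.liminf
        (fun R : ℝ =>
          volume (ω ∩ Metric.ball (0 : EuclideanSpace ℝ (Fin d)) R)
            / volume (Metric.ball (0 : EuclideanSpace ℝ (Fin d)) R))
        Filter.atTop := by
  set V := volume (ball (0 : EuclideanSpace ℝ (Fin d)) 1) with hV
  have hV0 : V ≠ 0 := (measure_ball_pos _ _ one_pos).ne'
  have hVtop : V ≠ ⊤ := measure_ball_lt_top.ne
  constructor
  · rintro ⟨γ, R, hγ, hγ1, hR, H⟩
    set κ : ℝ := R / (2 * (1 + R)) with hκdef
    have hκ : 0 < κ := by positivity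
    have hγ' : 0 < γ * κ ^ d := by positivity
    refine lt_of_lt_of_le (show (0:ENNReal) < ENNReal.ofReal (γ * κ ^ d) from
      ENNReal.ofReal_pos.mpr hγ') (Filter.le_liminf_of_le (by isBoundedDefault) ?_)
    rw [eventually_atTop]
    refine ⟨max (2 * R) 1, fun ρ hρ => ?_⟩
    have hρ1 : (1:ℝ) ≤ ρ := le_trans (le_max_right _ _) hρ
    have hρ0 : (0:ℝ) < ρ := lt_of_lt_of_le one_pos hρ1
    have hρR : 2 * R ≤ ρ := le_trans (le_max_left _ _) hρ
    set t : ℝ := ρ / (2 * (1 + R)) with htdef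
    have ht : 0 < t := by positivity
    -- pick a point x with the right properties
    obtain ⟨x, hx1, hx2⟩ : ∃ x : EuclideanSpace ℝ (Fin d),
        ‖x‖ ≤ t ∧ (κ * ρ) ^ d ≤ (R * jap x) ^ d := by
      rcases Nat.eq_zero_or_pos d with hd | hd
      · exact ⟨0, by simpa using ht.le, by simp [hd]⟩
      · refine ⟨t • EuclideanSpace.single (⟨0, hd⟩ : Fin d) (1:ℝ), ?_, ?_⟩
        · rw [norm_smul, EuclideanSpace.norm_single]
          simp [abs_of_nonneg ht.le]
        · apply pow_le_pow_left₀ (by positivity)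
          have h1 : κ * ρ = R * t := by rw [hκdef, htdef]; ring
          rw [h1]
          apply mul_le_mul_of_nonneg_left _ hR.le
          calc t = ‖t • EuclideanSpace.single (⟨0, hd⟩ : Fin d) (1:ℝ)‖ := by
                rw [norm_smul, EuclideanSpace.norm_single]
                simp [abs_of_nonneg ht.le]
            _ ≤ _ := norm_le_jap _
    have hjrw : R * jap x ^ (1:ℝ) = R * jap x := by rw [Real.rpow_one]
    have hr0 : 0 < R * jap x := mul_pos hR (jap_pos x)
    -- inclusion of balls
    have hincl : ball x (R * jap x) ⊆ ball (0 : EuclideanSpace ℝ (Fin d)) ρ := by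
      intro y hy
      rw [mem_ball, dist_eq_norm] at hy ⊢
      have h1 : ‖y - 0‖ ≤ ‖y - x‖ + ‖x‖ := by
        simpa using norm_sub_le_norm_sub_add_norm_sub y x 0
      have h2 : jap x ≤ 1 + t := le_trans (jap_le x) (by linarith)
      have h3 : t * (1 + R) = ρ / 2 := by rw [htdef]; field_simp
      have h4 : R * jap x ≤ R * (1 + t) := mul_le_mul_of_nonneg_left h2 hR.le
      nlinarith
    -- measure estimates
    have key : ENNReal.ofReal (γ * κ ^ d) * volume (ball (0 : EuclideanSpace ℝ (Fin d)) ρ)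
        ≤ volume (ω ∩ ball (0 : EuclideanSpace ℝ (Fin d)) ρ) := by
      have e1 : ENNReal.ofReal (γ * κ ^ d) * volume (ball (0 : EuclideanSpace ℝ (Fin d)) ρ)
          = ENNReal.ofReal γ * (ENNReal.ofReal ((κ * ρ) ^ d) * V) := by
        rw [volball _ hρ0, ← hV, ← mul_assoc,
          ← ENNReal.ofReal_mul (by positivity : (0:ℝ) ≤ γ * κ ^ d), ← mul_assoc,
          ← ENNReal.ofReal_mul hγ.le]
        congr 2
        rw [mul_pow]; ring
      rw [e1]
      have e2 : ENNReal.ofReal γ * (ENNReal.ofReal ((κ * ρ) ^ d) * V)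
          ≤ ENNReal.ofReal γ * volume (ball x (R * jap x)) := by
        rw [volball x hr0, ← hV]
        exact mul_le_mul_right (mul_le_mul_left (ENNReal.ofReal_le_ofReal hx2) V) _
      refine le_trans e2 (le_trans ?_ (measure_mono (Set.inter_subset_inter_right ω hincl)))
      have := H x
      rwa [hjrw] at this
    rw [ENNReal.le_div_iff_mul_le (Or.inl ?_) (Or.inl ?_)]
    · exact key
    · exact (measure_ball_pos _ _ hρ0).ne'
    · exact measure_ball_lt_top.ne
  · intro hL
    obtain ⟨a, ha0, haL⟩ := exists_between hL
    have hev : ∀ᶠ ρ in atTop, a <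
        volume (ω ∩ ball (0 : EuclideanSpace ℝ (Fin d)) ρ)
          / volume (ball (0 : EuclideanSpace ℝ (Fin d)) ρ) :=
      Filter.eventually_lt_of_lt_liminf haL
    rw [eventually_atTop] at hev
    obtain ⟨R₀, hR₀⟩ := hev
    set b : ENNReal := min a 1 with hb
    have hb0 : 0 < b := lt_min ha0 one_pos
    have hbtop : b ≠ ⊤ := by
      exact ne_top_of_le_ne_top ENNReal.one_ne_top (min_le_right a 1)
    set c : ℝ := b.toReal with hc
    have hc0 : 0 < c := ENNReal.toReal_pos hb0.ne' hbtop
    have hc1 : c ≤ 1 := by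
      have h := ENNReal.toReal_mono (ENNReal.one_ne_top) (min_le_right a 1)
      simpa using h
    have hbc : ENNReal.ofReal c = b := ENNReal.ofReal_toReal hbtop
    set R₁ : ℝ := max R₀ 1 with hR₁
    have hR₁1 : (1:ℝ) ≤ R₁ := le_max_right _ _
    have hR₁0 : (0:ℝ) < R₁ := lt_of_lt_of_le one_pos hR₁1
    have h2d : (1:ℝ) ≤ 2 ^ d := one_le_pow₀ one_le_two
    refine ⟨c / 2 ^ d, 2 * R₁, by positivity, ?_, by positivity, ?_⟩
    · rw [div_le_one (by positivity)]; linarith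
    · intro x
      have hj1 := one_le_jap x
      have hj0 := jap_pos x
      have hjrw : 2 * R₁ * jap x ^ (1:ℝ) = 2 * R₁ * jap x := by rw [Real.rpow_one]
      rw [hjrw]
      set s : ℝ := R₁ * jap x with hs
      have hs0 : 0 < s := mul_pos hR₁0 hj0
      have hsR₀ : R₀ ≤ s := le_trans (le_max_left _ _)
        (le_mul_of_one_le_right hR₁0.le hj1)
      have hr0 : (0:ℝ) < 2 * R₁ * jap x := by positivity
      have hincl : ball (0 : EuclideanSpace ℝ (Fin d)) s ⊆ ball x (2 * R₁ * jap x) := by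
        intro y hy
        rw [mem_ball, dist_eq_norm] at hy ⊢
        simp only [sub_zero] at hy
        have h1 : ‖y - x‖ ≤ ‖y - 0‖ + ‖x‖ := by
          simpa using norm_sub_le_norm_sub_add_norm_sub y 0 x
        have h2 : ‖x‖ ≤ jap x := norm_le_jap x
        have h3 : jap x ≤ R₁ * jap x := le_mul_of_one_le_left hj0.le hR₁1
        simp only [sub_zero] at h1
        calc ‖y - x‖ ≤ ‖y‖ + ‖x‖ := by simpa using h1
          _ < s + jap x := by exact add_lt_add_of_lt_of_le hy h2
          _ ≤ R₁ * jap x + R₁ * jap x := add_le_add le_rfl h3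
          _ = 2 * R₁ * jap x := by ring
      have hdiv := hR₀ s hsR₀
      have hmul : ENNReal.ofReal c * volume (ball (0 : EuclideanSpace ℝ (Fin d)) s)
          ≤ volume (ω ∩ ball (0 : EuclideanSpace ℝ (Fin d)) s) := by
        rw [← ENNReal.le_div_iff_mul_le (Or.inl (measure_ball_pos _ _ hs0).ne')
          (Or.inl measure_ball_lt_top.ne)]
        exact le_trans (hbc ▸ min_le_left a 1) hdiv.le
      have e1 : ENNReal.ofReal (c / 2 ^ d) * volume (ball x (2 * R₁ * jap x))
          = ENNReal.ofReal c * volume (ball (0 : EuclideanSpace ℝ (Fin d)) s) := by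
        rw [volball x hr0, volball _ hs0, ← hV, ← mul_assoc, ← mul_assoc,
          ← ENNReal.ofReal_mul (by positivity), ← ENNReal.ofReal_mul hc0.le]
        congr 2
        rw [hs]
        field_simp
        ring
      rw [e1]
      exact le_trans hmul (measure_mono (Set.inter_subset_inter_right ω hincl))
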